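/- arXiv:2006.12403 — 2 statements merged into one kernel-verified Lean document; each statement's English description precedes it below -/
import Mathlib

section
/- Let K be a field of characteristic zero, V a finite-dimensional K-vector space, and W = {W_k} a finite increasing filtration of V by subspaces. Then the unipotent group U = exp(W_{-1}End(V)), where W_{-1}End(V) = {X ∈ End(V) | X(W_k) ⊆ W_{k-1} for all k}, acts simply transitively on the set of splittings of W. -/
set_option linter.unusedSectionVars false
set_option linter.unnecessarySimpa false


/-- The truncated exponential of an endomorphism (agrees with `exp` on
nilpotent endomorphisms of a space of dimension `≤ finrank`). -/
noncomputable def nilExp {K V : Type*} [Field K] [CharZero K] [AddCommGroup V]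
    [Module K V] [FiniteDimensional K V] (X : Module.End K V) : Module.End K V :=
  ∑ k ∈ Finset.range (Module.finrank K V + 1), (k.factorial : K)⁻¹ • X ^ k

/-- A splitting of an increasing filtration `W`. -/
def IsSplitting {K V : Type*} [Field K] [AddCommGroup V] [Module K V]
    (W : ℤ → Submodule K V) (Vl : ℤ → Submodule K V) : Prop :=
  DirectSum.IsInternal Vl ∧ ∀ l : ℤ, W l = ⨆ k : ℤ, ⨆ _ : k ≤ l, Vl k

section Aux
variable {K V : Type*} [Field K] [CharZero K] [AddCommGroup V] [Module K V]
  [FiniteDimensional K V]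

/-- `f` shifts the filtration `W` down by `m`. -/
def SDeg (W : ℤ → Submodule K V) (m : ℤ) (f : Module.End K V) : Prop :=
  ∀ k v, v ∈ W k → f v ∈ W (k - m)

variable {W : ℤ → Submodule K V}

theorem SDeg.mono (hmono : Monotone W) {m m' : ℤ} {f : Module.End K V}
    (h : SDeg W m f) (hm : m' ≤ m) : SDeg W m' f :=
  fun k v hv => hmono (by omega) (h k v hv)

theorem SDeg.add {m : ℤ} {f g : Module.End K V} (hf : SDeg W m f) (hg : SDeg W m g) :
    SDeg W m (f + g) := fun k v hv => by
  simpa using (W (k - m)).add_mem (hf k v hv) (hg k v hv)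

theorem SDeg.neg {m : ℤ} {f : Module.End K V} (hf : SDeg W m f) : SDeg W m (-f) :=
  fun k v hv => by simpa using (W (k - m)).neg_mem (hf k v hv)

theorem SDeg.sub {m : ℤ} {f g : Module.End K V} (hf : SDeg W m f) (hg : SDeg W m g) :
    SDeg W m (f - g) := fun k v hv => by
  simpa using (W (k - m)).sub_mem (hf k v hv) (hg k v hv)

theorem SDeg.smul {m : ℤ} (c : K) {f : Module.End K V} (hf : SDeg W m f) :
    SDeg W m (c • f) := fun k v hv => by
  simpa using (W (k - m)).smul_mem c (hf k v hv)

theorem SDeg.zero (m : ℤ) : SDeg W m (0 : Module.End K V) :=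
  fun k v _ => by simpa using (W (k - m)).zero_mem

theorem SDeg.one : SDeg W 0 (1 : Module.End K V) :=
  fun k v hv => by simpa using hv

theorem SDeg.mul {m m' : ℤ} {f g : Module.End K V} (hf : SDeg W m f) (hg : SDeg W m' g) :
    SDeg W (m + m') (f * g) := fun k v hv => by
  have h := hf (k - m') (g v) (hg k v hv)
  have : k - m' - m = k - (m + m') := by ring
  rw [this] at h
  simpa using h

theorem SDeg.pow {f : Module.End K V} (hf : SDeg W 1 f) :
    ∀ n : ℕ, SDeg W (n : ℤ) (f ^ n)
  | 0 => by simpa using SDeg.one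
  | (n + 1) => by
      have := (SDeg.pow hf n).mul hf
      rw [← pow_succ] at this
      simpa using this

theorem SDeg.sum {m : ℤ} {ι : Type*} (t : Finset ι) {f : ι → Module.End K V}
    (h : ∀ i ∈ t, SDeg W m (f i)) : SDeg W m (∑ i ∈ t, f i) := fun k v hv => by
  rw [LinearMap.sum_apply]
  exact (W (k - m)).sum_mem fun i hi => h i hi k v hv

theorem sdeg_eq_zero {a b : ℤ} (hA : ∀ k ≤ a, W k = ⊥) (hB : ∀ k, b ≤ k → W k = ⊤)
    {m : ℤ} {f : Module.End K V} (hf : SDeg W m f) (hm : b - m ≤ a) : f = 0 := by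
  ext v
  have hv : v ∈ W b := by rw [hB b le_rfl]; trivial
  have := hf b v hv
  rw [hA _ hm] at this
  simpa using this

theorem nilExp_zero : nilExp (0 : Module.End K V) = 1 := by
  rw [nilExp, Finset.sum_eq_single 0]
  · simp
  · intro k _ hk
    rw [zero_pow hk, smul_zero]
  · intro h
    exact absurd (Finset.mem_range.mpr (Nat.succ_pos _)) h

theorem nilExp_sub_one (hmono : Monotone W) {X : Module.End K V} (hX : SDeg W 1 X) :
    SDeg W 1 (nilExp X - 1) := by
  have h1 : nilExp X = (∑ i ∈ Finset.range (Module.finrank K V),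
      ((i + 1).factorial : K)⁻¹ • X ^ (i + 1)) + 1 := by
    rw [nilExp, Finset.sum_range_succ']
    simp
  rw [h1, add_sub_cancel_right]
  refine SDeg.sum _ fun i _ => SDeg.smul _ ?_
  exact (hX.pow (i + 1)).mono hmono (by omega)
theorem diffpow (hmono : Monotone W) {X D : Module.End K V} {j : ℤ} (hj : 1 ≤ j)
    (hX : SDeg W 1 X) (hD : SDeg W j D) :
    ∀ k : ℕ, SDeg W (j + k) ((X + D) ^ (k + 1) - X ^ (k + 1))
  | 0 => by simpa using hD
  | (k + 1) => by
      have hXD : SDeg W 1 (X + D) := hX.add (hD.mono hmono hj)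
      have h1 := (diffpow hmono hj hX hD k).mul hXD
      have h2 := (hX.pow (k + 1)).mul hD
      have h2' : SDeg W (j + (k + 1 : ℕ)) (X ^ (k + 1) * D) := by
        refine h2.mono hmono (by push_cast; omega)
      have h1' : SDeg W (j + (k + 1 : ℕ)) (((X + D) ^ (k + 1) - X ^ (k + 1)) * (X + D)) := by
        refine h1.mono hmono (by push_cast; omega)
      have heq : (X + D) ^ (k + 1 + 1) - X ^ (k + 1 + 1)
          = ((X + D) ^ (k + 1) - X ^ (k + 1)) * (X + D) + X ^ (k + 1) * D := by
        rw [pow_succ, pow_succ]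
        noncomm_ring
      rw [heq]
      exact h1'.add h2'

theorem newton_key (hmono : Monotone W) {X D : Module.End K V} {j : ℤ} (hj : 1 ≤ j)
    (hX : SDeg W 1 X) (hD : SDeg W j D) :
    SDeg W (j + 1) (nilExp (X + D) - nilExp X - D) := by
  by_cases hdim : Module.finrank K V = 0
  · have : Subsingleton V := Module.finrank_zero_iff.mp hdim
    intro k v hv
    have : (nilExp (X + D) - nilExp X - D) v = 0 := Subsingleton.elim _ _
    rw [this]; exact zero_mem _
  · obtain ⟨n, hn⟩ := Nat.exists_eq_succ_of_ne_zero hdim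
    have key : nilExp (X + D) - nilExp X - D
        = ∑ i ∈ Finset.range n, ((i + 2).factorial : K)⁻¹ • ((X + D) ^ (i + 2) - X ^ (i + 2)) := by
      rw [nilExp, nilExp, ← Finset.sum_sub_distrib]
      have : ∀ k : ℕ, (k.factorial : K)⁻¹ • (X + D) ^ k - (k.factorial : K)⁻¹ • X ^ k
          = (k.factorial : K)⁻¹ • ((X + D) ^ k - X ^ k) := fun k => (smul_sub _ _ _).symm
      simp_rw [this, hn]
      rw [Finset.sum_range_succ' _ (n + 1), Finset.sum_range_succ' _ n]
      simp [sub_eq_iff_eq_add]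
    rw [key]
    refine SDeg.sum _ fun i _ => SDeg.smul _ ?_
    have := diffpow hmono hj hX hD (i + 1)
    exact this.mono hmono (by push_cast; omega)

theorem exists_log (hmono : Monotone W) {a b : ℤ} (hA : ∀ k ≤ a, W k = ⊥)
    (hB : ∀ k, b ≤ k → W k = ⊤) {N : Module.End K V} (hN : SDeg W 1 N) :
    ∃ X : Module.End K V, SDeg W 1 X ∧ nilExp X = 1 + N := by
  let F : ℕ → Module.End K V := fun m =>
    Nat.rec 0 (fun _ Y => Y + ((1 + N) - nilExp Y)) m
  have hF : ∀ m : ℕ, SDeg W 1 (F m) ∧ SDeg W ((m : ℤ) + 1) ((1 + N) - nilExp (F m)) := by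
    intro m
    induction m with
    | zero =>
        constructor
        · exact SDeg.zero 1
        · have : F 0 = 0 := rfl
          rw [this, nilExp_zero, add_sub_cancel_left]
          simpa using hN
    | succ m ih =>
        obtain ⟨ih1, ih2⟩ := ih
        have hDj : (1 : ℤ) ≤ (m : ℤ) + 1 := by omega
        have hstep : F (m + 1) = F m + ((1 + N) - nilExp (F m)) := rfl
        constructor
        · rw [hstep]; exact ih1.add (ih2.mono hmono hDj)
        · rw [hstep]
          have hk := newton_key hmono hDj ih1 ih2
          have heq : (1 + N) - nilExp (F m + ((1 + N) - nilExp (F m)))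
              = -(nilExp (F m + ((1 + N) - nilExp (F m))) - nilExp (F m)
                  - ((1 + N) - nilExp (F m))) := by abel
          rw [heq]
          have := hk.neg
          refine this.mono hmono (by push_cast; omega)
  set m := (b - a).toNat
  refine ⟨F m, (hF m).1, ?_⟩
  have hzero : (1 + N) - nilExp (F m) = 0 := by
    refine sdeg_eq_zero hA hB (hF m).2 ?_
    have := Int.self_le_toNat (b - a)
    omega
  have := sub_eq_zero.mp hzero
  rw [← this]
theorem IsSplitting.piece_le {s : ℤ → Submodule K V} (hs : IsSplitting W s) (l : ℤ) :
    s l ≤ W l := by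
  rw [hs.2 l]
  exact le_iSup₂ (f := fun k (_ : k ≤ l) => s k) l le_rfl

theorem IsSplitting.sup_eq (hmono : Monotone W) {s : ℤ → Submodule K V}
    (hs : IsSplitting W s) (l : ℤ) : W l = W (l - 1) ⊔ s l := by
  refine le_antisymm ?_ (sup_le (hmono (by omega)) (hs.piece_le l))
  rw [hs.2 l]
  refine iSup₂_le fun k hk => ?_
  rcases lt_or_eq_of_le hk with hk' | rfl
  · refine le_sup_of_le_left ?_
    rw [hs.2 (l - 1)]
    exact le_iSup₂ (f := fun k (_ : k ≤ l - 1) => s k) k (by omega)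
  · exact le_sup_right

theorem IsSplitting.disj {s : ℤ → Submodule K V} (hs : IsSplitting W s) (l : ℤ) :
    Disjoint (s l) (W (l - 1)) := by
  refine Disjoint.mono_right ?_ (hs.1.submodule_iSupIndep l)
  rw [hs.2 (l - 1)]
  exact iSup₂_le fun k hk => le_iSup₂ (f := fun k (_ : k ≠ l) => s k) k (by omega)

theorem IsSplitting.finrank_add {s : ℤ → Submodule K V} (hmono : Monotone W)
    (hs : IsSplitting W s) (l : ℤ) :
    Module.finrank K (s l) + Module.finrank K (W (l - 1)) = Module.finrank K (W l) := by
  have h := Submodule.finrank_sup_add_finrank_inf_eq (s l) (W (l - 1))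
  rw [(hs.disj l).eq_bot, finrank_bot, sup_comm, ← hs.sup_eq hmono l] at h
  omega

theorem components_vanish (hmono : Monotone W) {s : ℤ → Submodule K V}
    (hs : IsSplitting W s) {a : ℤ} (hA : ∀ k ≤ a, W k = ⊥)
    (l : ℤ) (v : V) (hv : v ∈ W l) (j : ℤ) (hj : l < j) :
    ((LinearEquiv.ofBijective (DirectSum.coeLinearMap s) hs.1).symm v) j = 0 := by
  set e := LinearEquiv.ofBijective (DirectSum.coeLinearMap s) hs.1 with he
  suffices haux : ∀ n : ℕ, ∀ l : ℤ, l ≤ a + n → ∀ v : V, v ∈ W l → ∀ j : ℤ, l < j →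
      (e.symm v) j = 0 by
    refine haux (l - a).toNat l ?_ v hv j hj
    have := Int.self_le_toNat (l - a)
    omega
  intro n
  induction n with
  | zero =>
      intro l hl v hv j _
      rw [hA l (by omega)] at hv
      rw [Submodule.mem_bot] at hv
      subst hv
      simp
  | succ n ih =>
      intro l hl v hv j hj
      rcases le_or_gt l (a + n) with hl' | hl'
      · exact ih l hl' v hv j hj
      · rw [hs.sup_eq hmono l] at hv
        obtain ⟨w, hw, y, hy, rfl⟩ := Submodule.mem_sup.mp hv
        rw [map_add, DirectSum.add_apply]
        rw [ih (l - 1) (by omega) w hw j (by omega),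
          hs.1.ofBijective_coeLinearMap_of_mem_ne (show l ≠ j by omega) hy]
        simp

theorem sub_component_mem (hmono : Monotone W) {s : ℤ → Submodule K V}
    (hs : IsSplitting W s) {a : ℤ} (hA : ∀ k ≤ a, W k = ⊥)
    (l : ℤ) (v : V) (hv : v ∈ W l) :
    v - (((LinearEquiv.ofBijective (DirectSum.coeLinearMap s) hs.1).symm v) l : V)
      ∈ W (l - 1) := by
  set e := LinearEquiv.ofBijective (DirectSum.coeLinearMap s) hs.1 with he
  have hv' := hv
  rw [hs.sup_eq hmono l] at hv'
  obtain ⟨w, hw, y, hy, rfl⟩ := Submodule.mem_sup.mp hv'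
  have h1 : (e.symm w) l = 0 :=
    components_vanish hmono hs hA (l - 1) w hw l (by omega)
  have h2 : (e.symm y) l = ⟨y, hy⟩ := hs.1.ofBijective_coeLinearMap_of_mem hy
  rw [map_add, DirectSum.add_apply, h1, h2]
  simpa using hw

theorem exists_g (hmono : Monotone W) {a b : ℤ} (hA : ∀ k ≤ a, W k = ⊥)
    (hB : ∀ k, b ≤ k → W k = ⊤) {s s' : ℤ → Submodule K V}
    (hs : IsSplitting W s) (hs' : IsSplitting W s') :
    ∃ g : Module.End K V, SDeg W 1 (g - 1) ∧ ∀ l : ℤ, (s l).map g = s' l := by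
  classical
  set e := LinearEquiv.ofBijective (DirectSum.coeLinearMap s) hs.1 with he
  set e' := LinearEquiv.ofBijective (DirectSum.coeLinearMap s') hs'.1 with he'
  set g : Module.End K V :=
    (DirectSum.toModule K ℤ V fun l =>
        ((s' l).subtype ∘ₗ (DirectSum.component K ℤ (fun l => (s' l : Submodule K V)) l)
          ∘ₗ e'.symm.toLinearMap)
        ∘ₗ (s l).subtype) ∘ₗ e.symm.toLinearMap with hgdef
  have hg1 : ∀ (l : ℤ) (x : V), x ∈ s l → g x = ((e'.symm x) l : V) := by
    intro l x hx
    have hsymm : e.symm x = DirectSum.lof K ℤ (fun l => (s l : Submodule K V)) l ⟨x, hx⟩ := by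
      apply e.injective
      rw [LinearEquiv.apply_symm_apply]
      show x = DirectSum.coeLinearMap s _
      rw [DirectSum.lof_eq_of, DirectSum.coeLinearMap_of]
    show (DirectSum.toModule K ℤ V _) (e.symm x) = _
    rw [hsymm, DirectSum.toModule_lof]
    rfl
  have hdeg : SDeg W 1 (g - 1) := by
    intro k v hv
    have hle : W k ≤ Submodule.comap ((g - 1 : Module.End K V) : V →ₗ[K] V) (W (k - 1)) := by
      rw [hs.2 k]
      refine iSup₂_le fun l hl => fun x hx => ?_
      rw [Submodule.mem_comap]
      have hxl : x ∈ W l := hs.piece_le l hx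
      have h6 := sub_component_mem hmono hs' hA l x hxl
      have hval : (g - 1 : Module.End K V) x
          = -(x - ((e'.symm x) l : V)) := by
        rw [LinearMap.sub_apply, Module.End.one_apply, hg1 l x hx]
        abel
      rw [hval]
      exact hmono (by omega) (neg_mem h6)
    exact hle hv
  refine ⟨g, hdeg, ?_⟩
  -- g is invertible
  have hnil : IsNilpotent (g - 1) := by
    refine ⟨(b - a).toNat + 1, ?_⟩
    refine sdeg_eq_zero hA hB (hdeg.pow _) ?_
    have := Int.self_le_toNat (b - a)
    push_cast
    omega
  have hgu : IsUnit g := by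
    have h1 : (1 : Module.End K V) + (g - 1) = g := by abel
    have := hnil.isUnit_one_add
    rwa [h1] at this
  have hbij := (Module.End.isUnit_iff g).mp hgu
  intro l
  have hle : (s l).map g ≤ s' l := by
    rintro _ ⟨x, hx, rfl⟩
    rw [hg1 l x hx]
    exact ((e'.symm x) l).2
  refine Submodule.eq_of_le_of_finrank_le hle ?_
  have hfr1 := hs.finrank_add hmono l
  have hfr2 := hs'.finrank_add hmono l
  have hmapfr : Module.finrank K ((s l).map g) = Module.finrank K (s l) := by
    have := LinearEquiv.finrank_map_eq (LinearEquiv.ofBijective (g : V →ₗ[K] V) hbij) (s l)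
    exact this
  omega

end Aux

/-- For a finite increasing filtration `W` of a finite-dimensional
vector space `V` over a field `K` of characteristic zero, the unipotent group
`U = exp(W₋₁ End(V))` acts simply transitively on the set of splittings of `W`:
for any two splittings there is a unique element of `U` taking one to the
other. -/
theorem unipotent_group_acts_simply_transitively_on_splittings
    {K V : Type*} [Field K] [CharZero K] [AddCommGroup V] [Module K V]
    [FiniteDimensional K V]
    (W : ℤ → Submodule K V) (hmono : Monotone W)
    (ha : ∃ a : ℤ, ∀ k ≤ a, W k = ⊥) (hb : ∃ b : ℤ, ∀ k, b ≤ k → W k = ⊤)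
    (s s' : ℤ → Submodule K V) (hs : IsSplitting W s) (hs' : IsSplitting W s') :
    ∃! g : Module.End K V,
      (∃ X : Module.End K V,
          (∀ (k : ℤ) (v : V), v ∈ W k → X v ∈ W (k - 1)) ∧ g = nilExp X) ∧
        ∀ l : ℤ, (s l).map g = s' l := by
  obtain ⟨a, hA⟩ := ha
  obtain ⟨b, hB⟩ := hb
  obtain ⟨g, hgdeg, hgmap⟩ := exists_g hmono hA hB hs hs'
  obtain ⟨X, hX, hXexp⟩ := exists_log hmono hA hB hgdeg
  have hgX : g = nilExp X := by rw [hXexp]; abel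
  refine ⟨g, ⟨⟨X, hX, hgX⟩, hgmap⟩, ?_⟩
  rintro g₁ ⟨⟨X₁, hX₁, rfl⟩, hmap₁⟩
  have hd1 : SDeg W 1 (nilExp X₁ - 1) := nilExp_sub_one hmono hX₁
  have hpt : ∀ (l : ℤ) (x : V), x ∈ s l → nilExp X₁ x = g x := by
    intro l x hx
    have m1 : nilExp X₁ x ∈ s' l := hmap₁ l ▸ Submodule.mem_map_of_mem hx
    have m2 : g x ∈ s' l := hgmap l ▸ Submodule.mem_map_of_mem hx
    have hxl : x ∈ W l := hs.piece_le l hx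
    have m3 : nilExp X₁ x - x ∈ W (l - 1) := by
      have := hd1 l x hxl
      simpa [LinearMap.sub_apply] using this
    have m4 : g x - x ∈ W (l - 1) := by
      have := hgdeg l x hxl
      simpa [LinearMap.sub_apply] using this
    have m5 : nilExp X₁ x - g x ∈ W (l - 1) := by
      have := (W (l - 1)).sub_mem m3 m4
      rwa [sub_sub_sub_cancel_right] at this
    have := Submodule.disjoint_def.mp (hs'.disj l) _ ((s' l).sub_mem m1 m2) m5
    exact sub_eq_zero.mp this
  have hker : ⊤ ≤ LinearMap.ker ((nilExp X₁ - g : Module.End K V) : V →ₗ[K] V) := by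
    rw [← hs.1.submodule_iSup_eq_top]
    refine iSup_le fun l => fun x hx => ?_
    rw [LinearMap.mem_ker, LinearMap.sub_apply, sub_eq_zero]
    exact hpt l x hx
  have hz : nilExp X₁ - g = 0 := by
    refine LinearMap.ext fun v => ?_
    have h0 := hker (Submodule.mem_top : v ∈ (⊤ : Submodule K V))
    rw [LinearMap.mem_ker] at h0
    simpa using h0
  exact sub_eq_zero.mp hz
end

section
/- Let ζ ∈ ℂ be a primitive m-th root of unity with m > 1, and let p be a prime not dividing m and larger than m. If A ∈ GL_n(ℤ) has ζ as an eigenvalue, then A is not congruent to the identity matrix modulo p. -/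
open Polynomial

lemma charpoly_one_aux (R : Type*) [CommRing R] (n : ℕ) :
    (1 : Matrix (Fin n) (Fin n) R).charpoly = (X - 1) ^ n := by
  have h : Matrix.charmatrix (1 : Matrix (Fin n) (Fin n) R)
      = ((X : R[X]) - 1) • (1 : Matrix (Fin n) (Fin n) R[X]) := by
    ext i j
    by_cases hij : i = j <;>
      simp [Matrix.charmatrix_apply, Matrix.one_apply, hij, sub_eq_add_neg]
  rw [Matrix.charpoly, h, Matrix.det_smul, Matrix.det_one, Fintype.card_fin, mul_one]

/-- let `ζ ∈ ℂ` be a primitive `m`-th root of unity with `m > 1`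
and let `p` be a prime not dividing `m` with `p > m`. If `A ∈ GL_n(ℤ)` has `ζ`
as an eigenvalue, then `A` is not congruent to the identity matrix modulo
`p`. -/
theorem not_congruent_id_of_primitive_root_eigenvalue
    {n : ℕ} (A : GL (Fin n) ℤ) (m : ℕ) (hm : 1 < m) (ζ : ℂ)
    (hζ : IsPrimitiveRoot ζ m)
    (p : ℕ) (hp : p.Prime) (hpm : ¬ (p ∣ m)) (hmp : m < p)
    (heig : (((A : Matrix (Fin n) (Fin n) ℤ).map (Int.cast : ℤ → ℂ)).charpoly).IsRoot ζ) :
    ¬ ((A : Matrix (Fin n) (Fin n) ℤ).map (Int.cast : ℤ → ZMod p) = 1) := by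
  intro hcong
  set M : Matrix (Fin n) (Fin n) ℤ := (A : Matrix (Fin n) (Fin n) ℤ)
  have hpos : 0 < m := lt_trans one_pos hm
  -- ζ is a root of the integer charpoly (mapped to ℂ)
  have hmap : (M.map (Int.cast : ℤ → ℂ)).charpoly = M.charpoly.map (Int.castRingHom ℂ) :=
    Matrix.charpoly_map M (Int.castRingHom ℂ)
  have haev : Polynomial.aeval ζ M.charpoly = 0 := by
    rw [Polynomial.aeval_def, ← Polynomial.eval_map]
    have := heig
    rw [hmap] at this
    exact this
  -- cyclotomic m ℤ divides charpoly over ℤ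
  have hint : IsIntegral ℤ ζ := hζ.isIntegral hpos
  have hmin : Polynomial.cyclotomic m ℤ = minpoly ℤ ζ :=
    Polynomial.cyclotomic_eq_minpoly hζ hpos
  have hdvdZ : Polynomial.cyclotomic m ℤ ∣ M.charpoly := by
    rw [hmin]
    exact minpoly.isIntegrallyClosed_dvd hint haev
  -- map to ZMod p
  have hdvdP : Polynomial.cyclotomic m (ZMod p) ∣ (X - 1) ^ n := by
    have := Polynomial.map_dvd (Int.castRingHom (ZMod p)) hdvdZ
    rw [Polynomial.map_cyclotomic] at this
    rw [← Matrix.charpoly_map M (Int.castRingHom (ZMod p))] at this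
    have hMmap : M.map (Int.castRingHom (ZMod p)) = 1 := hcong
    rw [hMmap, charpoly_one_aux] at this
    exact this
  haveI : Fact p.Prime := ⟨hp⟩
  -- (X - 1) is prime
  have hprime : Prime (X - 1 : (ZMod p)[X]) := by
    have := Polynomial.prime_X_sub_C (1 : ZMod p)
    simpa using this
  obtain ⟨i, _, hassoc⟩ := (dvd_prime_pow hprime n).mp hdvdP
  have hnotunit : ¬ IsUnit (Polynomial.cyclotomic m (ZMod p)) := by
    intro hu
    have hdeg := Polynomial.natDegree_eq_zero_of_isUnit hu
    rw [Polynomial.natDegree_cyclotomic] at hdeg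
    exact (Nat.totient_pos.mpr hpos).ne' hdeg
  have hi : i ≠ 0 := by
    rintro rfl
    exact hnotunit (hassoc.symm.isUnit (by simp))
  have hroot : Polynomial.IsRoot (Polynomial.cyclotomic m (ZMod p)) 1 := by
    have hdvd1 : (X - 1 : (ZMod p)[X]) ∣ Polynomial.cyclotomic m (ZMod p) :=
      (dvd_pow_self (X - 1 : (ZMod p)[X]) hi).trans hassoc.symm.dvd
    have : (X - Polynomial.C (1 : ZMod p)) ∣ Polynomial.cyclotomic m (ZMod p) := by
      simpa using hdvd1
    exact (Polynomial.dvd_iff_isRoot).mp this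
  haveI : NeZero ((m : ZMod p)) := ⟨by
    rw [Ne, ZMod.natCast_eq_zero_iff]
    exact hpm⟩
  have hprim : IsPrimitiveRoot (1 : ZMod p) m :=
    (Polynomial.isRoot_cyclotomic_iff).mp hroot
  have : m ∣ 1 := hprim.dvd_of_pow_eq_one 1 (by simp)
  exact absurd (Nat.dvd_one.mp this) (by omega)
end
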